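/- Let T be a braided self-adjoint contraction on H ⊗ H, and let U_n = (T_1⋯T_n)(T_1⋯T_{n-1})⋯T_1 on H^{⊗(n+1)}. Then ker P_{n+1} is invariant under U_n. -/

import Mathlib

open scoped ComplexOrder

namespace Wick

/-- The operator `T_i = 1^{⊗(i-1)} ⊗ T ⊗ 1^{⊗(n-i-1)}` on `H^{⊗n}` (1-indexed, acting on
tensor factors `i` and `i+1`), where `H = ℂ^d` and `H^{⊗n}` is identified with
functions `(Fin n → Fin d) → ℂ` via the basis of elementary tensors. -/
noncomputable def Ti (d n : ℕ) (T : Matrix (Fin d × Fin d) (Fin d × Fin d) ℂ) (i : ℕ) :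
    Matrix (Fin n → Fin d) (Fin n → Fin d) ℂ :=
  if h : 1 ≤ i ∧ i < n then
    fun w w' =>
      T (w ⟨i - 1, by omega⟩, w ⟨i, h.2⟩) (w' ⟨i - 1, by omega⟩, w' ⟨i, h.2⟩) *
        ∏ j : Fin n, if (j : ℕ) = i - 1 ∨ (j : ℕ) = i then 1 else (if w j = w' j then 1 else 0)
  else 1

/-- The product `T_1 T_2 ⋯ T_k` on `H^{⊗n}`. -/
noncomputable def prodT (d n : ℕ) (T : Matrix (Fin d × Fin d) (Fin d × Fin d) ℂ) (k : ℕ) :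
    Matrix (Fin n → Fin d) (Fin n → Fin d) ℂ :=
  ((List.range k).map (fun j => Ti d n T (j + 1))).prod

/-- The reversed product `T_k T_{k-1} ⋯ T_1` on `H^{⊗n}`. -/
noncomputable def prodTrev (d n : ℕ) (T : Matrix (Fin d × Fin d) (Fin d × Fin d) ℂ) (k : ℕ) :
    Matrix (Fin n → Fin d) (Fin n → Fin d) ℂ :=
  ((List.range k).map (fun j => Ti d n T (k - j))).prod

/-- `R_n = 1 + T_1 + T_1 T_2 + ⋯ + T_1 T_2 ⋯ T_{n-1}` on `H^{⊗n}`. -/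
noncomputable def Rmat (d n : ℕ) (T : Matrix (Fin d × Fin d) (Fin d × Fin d) ℂ) :
    Matrix (Fin n → Fin d) (Fin n → Fin d) ℂ :=
  ∑ k ∈ Finset.range n, prodT d n T k

/-- `1 ⊗ A` on `H^{⊗(n+1)}`, for `A` an operator on `H^{⊗n}`. -/
noncomputable def oneTensor (d n : ℕ) (A : Matrix (Fin n → Fin d) (Fin n → Fin d) ℂ) :
    Matrix (Fin (n + 1) → Fin d) (Fin (n + 1) → Fin d) ℂ :=
  fun w w' => (if w 0 = w' 0 then 1 else 0) * A (fun j => w j.succ) (fun j => w' j.succ)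

/-- `A ⊗ 1` on `H^{⊗(n+1)}`, for `A` an operator on `H^{⊗n}`. -/
noncomputable def tensorOne (d n : ℕ) (A : Matrix (Fin n → Fin d) (Fin n → Fin d) ℂ) :
    Matrix (Fin (n + 1) → Fin d) (Fin (n + 1) → Fin d) ℂ :=
  fun w w' =>
    A (fun j => w j.castSucc) (fun j => w' j.castSucc) *
      (if w (Fin.last n) = w' (Fin.last n) then 1 else 0)

/-- The operators `P_n` on `H^{⊗n}`: `P_1 = 1`, `P_{n+1} = (1 ⊗ P_n) R_{n+1}`
(so `P_2 = R_2 = 1 + T`). -/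
noncomputable def Pmat (d : ℕ) (T : Matrix (Fin d × Fin d) (Fin d × Fin d) ℂ) :
    (n : ℕ) → Matrix (Fin n → Fin d) (Fin n → Fin d) ℂ
  | 0 => 1
  | n + 1 => oneTensor d n (Pmat d T n) * Rmat d (n + 1) T

/-- `U_n = (T_1 ⋯ T_n)(T_1 ⋯ T_{n-1}) ⋯ (T_1 T_2) T_1` on `H^{⊗m}`. -/
noncomputable def Umat (d m : ℕ) (T : Matrix (Fin d × Fin d) (Fin d × Fin d) ℂ) (n : ℕ) :
    Matrix (Fin m → Fin d) (Fin m → Fin d) ℂ :=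
  ((List.range n).map (fun j => prodT d m T (n - j))).prod

/-- The braid condition `T_1 T_2 T_1 = T_2 T_1 T_2` on `H^{⊗3}`. -/
def Braided (d : ℕ) (T : Matrix (Fin d × Fin d) (Fin d × Fin d) ℂ) : Prop :=
  Ti d 3 T 1 * Ti d 3 T 2 * Ti d 3 T 1 = Ti d 3 T 2 * Ti d 3 T 1 * Ti d 3 T 2

/-- Elementary tensor `X ⊗ Y ∈ H^{⊗(n+m)}`. -/
noncomputable def tensorVec {d n m : ℕ} (X : (Fin n → Fin d) → ℂ) (Y : (Fin m → Fin d) → ℂ) :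
    (Fin (n + m) → Fin d) → ℂ :=
  fun u => X (fun i => u (Fin.castAdd m i)) * Y (fun j => u (Fin.natAdd n j))

/-!
Write `s i` for `T_{i+1}`. The recursion
`P_{n+1} = (1 ⊗ P_n) R_{n+1}` makes `P_{n+1}` a polynomial in `s 0, …, s (n - 1)`. Using the
braid relations, the exchange `L_n R_{n+1} = R_n L_{n+1}` between the ascending sums `R` and the
descending sums `L` turns this factorization into the mirrored one `P_{n+1} = (P_n ⊗ 1) L_{n+1}`,
so `P_{n+1}` is invariant under the reversal `s i ↦ s (n - 1 - i)`. The operator `U_n` is a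
positive lift of the longest permutation, so `U_n s i = s (n - 1 - i) U_n`. Hence `U_n` commutes
with `P_{n+1}` and preserves its kernel.
-/

section BraidRelations

variable {A : Type*} [Semiring A]

/-- `s 0, …, s (n - 2)` satisfy the relations of the braid group on `n` strands. -/
structure SatisfiesBraidRelations (s : ℕ → A) (n : ℕ) : Prop where
  commute : ∀ i j, i + 2 ≤ j → j + 2 ≤ n → Commute (s i) (s j)
  braid : ∀ i, i + 3 ≤ n → s i * s (i + 1) * s i = s (i + 1) * s i * s (i + 1)

namespace SatisfiesBraidRelations

variable {s : ℕ → A} {n : ℕ}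

theorem mono (hs : SatisfiesBraidRelations s n) {m : ℕ} (hmn : m ≤ n) :
    SatisfiesBraidRelations s m :=
  ⟨fun i j hij _ => hs.commute i j hij (by omega), fun i _ => hs.braid i (by omega)⟩

theorem shift (hs : SatisfiesBraidRelations s (n + 1)) :
    SatisfiesBraidRelations (fun i => s (i + 1)) n :=
  ⟨fun _ _ _ _ => hs.commute _ _ (by omega) (by omega), fun i _ => hs.braid (i + 1) (by omega)⟩

end SatisfiesBraidRelations

def ascProd (s : ℕ → A) (a k : ℕ) : A := ((List.range k).map fun j => s (a + j)).prod

def descProd (s : ℕ → A) (b k : ℕ) : A := ((List.range k).map fun j => s (b - j)).prod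

def ascSum (s : ℕ → A) (n : ℕ) : A := ∑ k ∈ Finset.range n, ascProd s 0 k

def descSum (s : ℕ → A) (b n : ℕ) : A := ∑ k ∈ Finset.range n, descProd s b k

/-- The operator `P_n`, in the generators `s i = T_{i+1}`. -/
def symmetrizer : (ℕ → A) → ℕ → A
  | _, 0 => 1
  | s, n + 1 => symmetrizer (fun i => s (i + 1)) n * ascSum s (n + 1)

/-- The operator `U_n`, a positive lift of the longest permutation of `n + 1` strands. -/
def halfTwist (s : ℕ → A) (n : ℕ) : A :=
  ((List.range n).map fun j => ascProd s 0 (n - j)).prod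

variable {s : ℕ → A} {N : ℕ}

@[simp] theorem ascProd_zero (a : ℕ) : ascProd s a 0 = 1 := rfl

theorem ascProd_succ (a k : ℕ) : ascProd s a (k + 1) = ascProd s a k * s (a + k) := by
  simp [ascProd, List.range_succ]

theorem ascProd_succ' (a k : ℕ) : ascProd s a (k + 1) = s a * ascProd s (a + 1) k := by
  simp only [ascProd, List.range_succ_eq_map, List.map_cons, List.map_map, List.prod_cons,
    add_zero, Function.comp_def]
  congr 3
  funext j
  congr 1
  omega

@[simp] theorem ascProd_one (a : ℕ) : ascProd s a 1 = s a := by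
  simp [ascProd]

theorem ascProd_add (a k l : ℕ) :
    ascProd s a (k + l) = ascProd s a k * ascProd s (a + k) l := by
  simp only [ascProd, List.range_add, List.map_append, List.prod_append, List.map_map,
    Function.comp_def, add_assoc]

theorem descProd_succ (b k : ℕ) : descProd s b (k + 1) = descProd s b k * s (b - k) := by
  simp [descProd, List.range_succ]

theorem commute_ascProd {x : A} {a k : ℕ} (h : ∀ j < k, Commute x (s (a + j))) :
    Commute x (ascProd s a k) :=
  Commute.list_prod_right _ _ fun y hy => by
    obtain ⟨j, hj, rfl⟩ := List.mem_map.1 hy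
    exact h j (List.mem_range.1 hj)

theorem commute_descProd {x : A} {b k : ℕ} (h : ∀ j < k, Commute x (s (b - j))) :
    Commute x (descProd s b k) :=
  Commute.list_prod_right _ _ fun y hy => by
    obtain ⟨j, hj, rfl⟩ := List.mem_map.1 hy
    exact h j (List.mem_range.1 hj)

theorem ascProd_mul_eq_mul_ascProd (hs : SatisfiesBraidRelations s N) {a k j : ℕ} (ha : a ≤ j)
    (hj : j + 2 ≤ a + k) (hN : a + k + 1 ≤ N) :
    ascProd s a k * s j = s (j + 1) * ascProd s a k := by
  obtain ⟨p, r, rfl, rfl⟩ : ∃ p r, k = p + 2 + r ∧ j = a + p :=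
    ⟨j - a, a + k - j - 2, by omega, by omega⟩
  have hlow : Commute (s (a + p)) (ascProd s (a + p + 2) r) :=
    commute_ascProd fun i _ => hs.commute _ _ (by omega) (by omega)
  have hhigh : Commute (s (a + p + 1)) (ascProd s a p) :=
    commute_ascProd fun i _ => (hs.commute _ _ (by omega) (by omega)).symm
  rw [ascProd_add, ascProd_add, ← add_assoc, show 2 = 1 + 1 from rfl, ascProd_succ,
    ascProd_one]
  calc ascProd s a p * (s (a + p) * s (a + p + 1)) * ascProd s (a + p + 2) r * s (a + p)
      = ascProd s a p * (s (a + p) * s (a + p + 1) * s (a + p)) * ascProd s (a + p + 2) r := by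
        simp only [mul_assoc, hlow.symm.eq]
    _ = ascProd s a p * (s (a + p + 1) * s (a + p) * s (a + p + 1)) *
          ascProd s (a + p + 2) r := by rw [hs.braid _ (by omega)]
    _ = _ := by simp only [← mul_assoc, hhigh.eq]

/-- `(s n ⋯ s (a + 1)) (s a ⋯ s (a + c)) = (s a ⋯ s (a + c - 1)) (s n ⋯ s a)`. -/
theorem descProd_mul_ascProd_succ (hs : SatisfiesBraidRelations s N) {n c a : ℕ}
    (hN : n + 2 ≤ N) (hac : a + c ≤ n) :
    descProd s n (n - a) * ascProd s a (c + 1) = ascProd s a c * descProd s n (n - a + 1) := by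
  induction c generalizing a with
  | zero => simp [descProd_succ, show n - (n - a) = a by omega]
  | succ c ih =>
    have hsplit : descProd s n (n - a) = descProd s n (n - (a + 1)) * s (a + 1) := by
      rw [show n - a = n - (a + 1) + 1 by omega, descProd_succ,
        show n - (n - (a + 1)) = a + 1 by omega]
    have hlast : descProd s n (n - a + 1) = descProd s n (n - a) * s a := by
      rw [descProd_succ, show n - (n - a) = a by omega]
    have hD : Commute (s a) (descProd s n (n - (a + 1))) :=
      commute_descProd fun _ _ => hs.commute _ _ (by omega) (by omega)
    have hA : Commute (s a) (ascProd s (a + 1 + 1) c) :=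
      commute_ascProd fun _ _ => hs.commute _ _ (by omega) (by omega)
    calc descProd s n (n - a) * ascProd s a (c + 1 + 1)
        = descProd s n (n - (a + 1)) * (s (a + 1) * s a * s (a + 1)) *
            ascProd s (a + 1 + 1) c := by
          simp only [hsplit, ascProd_succ', mul_assoc]
      _ = descProd s n (n - (a + 1)) * (s a * s (a + 1) * s a) * ascProd s (a + 1 + 1) c := by
          rw [hs.braid a (by omega)]
      _ = s a * (descProd s n (n - (a + 1)) * ascProd s (a + 1) (c + 1)) * s a := by
          simp only [ascProd_succ', mul_assoc, hA.symm.eq, hD.left_comm]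
      _ = ascProd s a (c + 1) * descProd s n (n - a + 1) := by
          rw [ih (by omega), show n - (a + 1) + 1 = n - a by omega, hlast, ascProd_succ']
          simp only [mul_assoc]

theorem commute_ascProd_descProd (hs : SatisfiesBraidRelations s N) {n k c : ℕ}
    (hkc : k + c ≤ n) (hN : n + 2 ≤ N) : Commute (ascProd s 0 k) (descProd s n c) :=
  commute_descProd fun _ _ =>
    (commute_ascProd fun _ _ => (hs.commute _ _ (by omega) (by omega)).symm).symm

theorem descProd_mul_ascProd_of_lt (hs : SatisfiesBraidRelations s N) {n k c : ℕ}
    (hkc : n < k + c) (hc : c ≤ n) (hk : k ≤ n + 1) (hN : n + 2 ≤ N) :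
    descProd s n c * ascProd s 0 k = ascProd s 0 (k - 1) * descProd s n (c + 1) := by
  obtain ⟨a, b, rfl, rfl⟩ : ∃ a b, c = n - a ∧ k = a + (b + 1) :=
    ⟨n - c, k - 1 - (n - c), by omega, by omega⟩
  rw [ascProd_add, ← mul_assoc, ← (commute_ascProd_descProd hs (by omega) hN).eq, mul_assoc,
    zero_add, descProd_mul_ascProd_succ hs hN (by omega), show a + (b + 1) - 1 = a + b by omega,
    ascProd_add, zero_add, mul_assoc]

/-- `commute_ascProd_descProd` and `descProd_mul_ascProd_of_lt` match the terms of the two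
sides bijectively. -/
theorem descSum_mul_ascSum (hs : SatisfiesBraidRelations s N) {n : ℕ} (hN : n + 2 ≤ N) :
    descSum s n (n + 1) * ascSum s (n + 2) = ascSum s (n + 1) * descSum s n (n + 2) := by
  simp only [descSum, ascSum, Finset.sum_mul_sum, ← Finset.sum_product']
  refine Finset.sum_nbij' (fun x => if x.2 + x.1 ≤ n then (x.2, x.1) else (x.2 - 1, x.1 + 1))
    (fun x => if x.1 + x.2 ≤ n then (x.2, x.1) else (x.2 - 1, x.1 + 1)) ?_ ?_ ?_ ?_ ?_
  all_goals
    rintro ⟨c, k⟩ hx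
    simp only [Finset.mem_product, Finset.mem_range] at hx
  iterate 4
    split_ifs <;> simp only [Finset.mem_product, Finset.mem_range, Prod.mk.injEq] <;> omega
  · dsimp only
    split_ifs with h
    · exact (commute_ascProd_descProd hs h hN).symm.eq
    · exact descProd_mul_ascProd_of_lt hs (by omega) (by omega) (by omega) hN

theorem symmetrizer_succ (s : ℕ → A) (n : ℕ) :
    symmetrizer s (n + 1) = symmetrizer (fun i => s (i + 1)) n * ascSum s (n + 1) := rfl

theorem semiconjBy_ascProd {u : A} {s' : ℕ → A} {a k : ℕ}
    (h : ∀ j < k, SemiconjBy u (s (a + j)) (s' (a + j))) :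
    SemiconjBy u (ascProd s a k) (ascProd s' a k) := by
  induction k with
  | zero => exact SemiconjBy.one_right u
  | succ k ih =>
    rw [ascProd_succ, ascProd_succ]
    exact (ih fun j hj => h j (by omega)).mul_right (h k (by omega))

theorem semiconjBy_symmetrizer {u : A} {n : ℕ} :
    ∀ {s s' : ℕ → A}, (∀ i, i + 2 ≤ n → SemiconjBy u (s i) (s' i)) →
      SemiconjBy u (symmetrizer s n) (symmetrizer s' n) := by
  induction n with
  | zero => exact fun _ => SemiconjBy.one_right u
  | succ n ih =>
    intro s s' h
    refine (ih fun i hi => h (i + 1) (by omega)).mul_right ?_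
    simp only [ascSum, SemiconjBy, Finset.mul_sum, Finset.sum_mul]
    refine Finset.sum_congr rfl fun k hk => semiconjBy_ascProd fun j hj => h _ ?_
    simp only [Finset.mem_range] at hk
    omega

theorem symmetrizer_congr {s' : ℕ → A} {n : ℕ} (h : ∀ i, i + 2 ≤ n → s i = s' i) :
    symmetrizer s n = symmetrizer s' n := by
  simpa [SemiconjBy] using
    semiconjBy_symmetrizer (u := (1 : A)) fun i hi => by simp [SemiconjBy, h i hi]

theorem map_symmetrizer {B : Type*} [Semiring B] (f : A →+* B) (s : ℕ → A) (n : ℕ) :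
    f (symmetrizer s n) = symmetrizer (fun i => f (s i)) n := by
  induction n generalizing s with
  | zero => exact f.map_one
  | succ n ih =>
    simp only [symmetrizer_succ, map_mul, ih, ascSum, ascProd, map_sum, map_list_prod,
      List.map_map, Function.comp_def]

theorem symmetrizer_reverse_succ (s : ℕ → A) (c n : ℕ) :
    symmetrizer (fun i => s (c - i)) (n + 1) =
      symmetrizer (fun i => s (c - 1 - i)) n * descSum s c (n + 1) := by
  simp only [symmetrizer_succ, ascSum, descSum, ascProd, descProd, zero_add, Nat.sub_sub,
    Nat.add_comm 1]

theorem symmetrizer_reverse_shift (s : ℕ → A) (n : ℕ) :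
    symmetrizer (fun i => s (n - 2 - i + 1)) n = symmetrizer (fun i => s (n - 1 - i)) n :=
  symmetrizer_congr fun i hi => congrArg s (by omega)

theorem symmetrizer_reverse {n : ℕ} (hs : SatisfiesBraidRelations s n) :
    symmetrizer (fun i => s (n - 2 - i)) n = symmetrizer s n := by
  induction n using Nat.strong_induction_on generalizing s with
  | _ n ih =>
  match n, hs with
  | 0, _ => rfl
  | 1, _ => rfl
  | n + 2, hs =>
    have ih_shift (m : ℕ) (hm : m ≤ n + 1) :
        symmetrizer (fun i => s (m - 1 - i)) m = symmetrizer (fun i => s (i + 1)) m := by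
      rw [← symmetrizer_reverse_shift, ih m (by omega) (hs.shift.mono hm)]
    have ih_succ : symmetrizer (fun i => s (n - 1 - i)) (n + 1) = symmetrizer s (n + 1) :=
      ih (n + 1) (by omega) (hs.mono (by omega))
    calc symmetrizer (fun i => s (n + 2 - 2 - i)) (n + 2)
        = symmetrizer (fun i => s (n - 1 - i)) (n + 1) * descSum s n (n + 2) :=
          symmetrizer_reverse_succ s n (n + 1)
      _ = symmetrizer (fun i => s (n - 1 - i)) n * (descSum s n (n + 1) * ascSum s (n + 2)) := by
          rw [ih_succ, symmetrizer_succ, ← ih_shift n (by omega), mul_assoc,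
            descSum_mul_ascSum hs le_rfl]
      _ = symmetrizer s (n + 2) := by
          rw [← mul_assoc, ← symmetrizer_reverse_succ]
          exact congrArg (· * ascSum s (n + 2)) (ih_shift (n + 1) le_rfl)

theorem halfTwist_succ (r : ℕ) : halfTwist s (r + 1) = ascProd s 0 (r + 1) * halfTwist s r := by
  simp [halfTwist, List.range_succ_eq_map, Function.comp_def]

theorem commute_halfTwist (hs : SatisfiesBraidRelations s N) {r j : ℕ} (hr : r + 1 ≤ j)
    (hj : j + 2 ≤ N) : Commute (s j) (halfTwist s r) :=
  Commute.list_prod_right _ _ fun y hy => by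
    obtain ⟨i, -, rfl⟩ := List.mem_map.1 hy
    exact commute_ascProd fun l _ => (hs.commute _ _ (by omega) hj).symm

theorem ascProd_mul_ascProd (hs : SatisfiesBraidRelations s N) {q r : ℕ} (hqr : q < r)
    (hN : r + 1 ≤ N) : ascProd s 0 r * ascProd s 0 q = ascProd s 1 q * ascProd s 0 r := by
  induction q with
  | zero => simp
  | succ q ih =>
    rw [ascProd_succ, ← mul_assoc, ih (by omega), mul_assoc, zero_add,
      ascProd_mul_eq_mul_ascProd hs (Nat.zero_le q) (by omega) (by omega), ← mul_assoc,
      ascProd_succ 1 q, Nat.add_comm 1 q]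

theorem halfTwist_mul_eq_mul_halfTwist (hs : SatisfiesBraidRelations s N) {r i : ℕ}
    (hN : r + 1 ≤ N) (hi : i < r) : halfTwist s r * s i = s (r - 1 - i) * halfTwist s r := by
  induction r generalizing i with
  | zero => omega
  | succ r ih =>
    rcases Nat.lt_or_ge i r with hir | hir
    · rw [halfTwist_succ, mul_assoc, ih (by omega) hir, ← mul_assoc,
        ascProd_mul_eq_mul_ascProd hs (Nat.zero_le _) (by omega) (by omega), mul_assoc,
        show r - 1 - i + 1 = r + 1 - 1 - i by omega]
    obtain rfl : r = i := by omega
    rcases r with _ | q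
    · simp [halfTwist]
    · have hU : Commute (s (q + 1)) (halfTwist s q) := commute_halfTwist hs le_rfl (by omega)
      have hlast : ascProd s 0 (q + 1) * s (q + 1) = ascProd s 0 (q + 1 + 1) := by
        rw [ascProd_succ 0 (q + 1), zero_add]
      have hfirst : s 0 * ascProd s 1 (q + 1) = ascProd s 0 (q + 1 + 1) := by
        rw [ascProd_succ' 0 (q + 1), zero_add]
      calc halfTwist s (q + 1 + 1) * s (q + 1)
          = ascProd s 0 (q + 1 + 1) * ascProd s 0 (q + 1 + 1) * halfTwist s q := by
            simp only [halfTwist_succ, mul_assoc, hU.symm.eq]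
            rw [← mul_assoc (ascProd s 0 (q + 1)), hlast]
        _ = s 0 * (ascProd s 0 (q + 1 + 1) * ascProd s 0 (q + 1)) * halfTwist s q := by
            rw [ascProd_mul_ascProd hs (q := q + 1) (r := q + 1 + 1) (by omega) hN,
              ← mul_assoc, hfirst]
        _ = s (q + 1 + 1 - 1 - (q + 1)) * halfTwist s (q + 1 + 1) := by
            rw [halfTwist_succ, halfTwist_succ, show q + 1 + 1 - 1 - (q + 1) = 0 by omega]
            simp only [mul_assoc]

theorem commute_symmetrizer_halfTwist {n : ℕ} (hs : SatisfiesBraidRelations s (n + 1)) :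
    Commute (symmetrizer s (n + 1)) (halfTwist s n) := by
  have h : SemiconjBy (halfTwist s n) (symmetrizer s (n + 1))
      (symmetrizer (fun i => s (n + 1 - 2 - i)) (n + 1)) :=
    semiconjBy_symmetrizer fun _ _ => halfTwist_mul_eq_mul_halfTwist hs le_rfl (by omega)
  rw [symmetrizer_reverse hs] at h
  exact Commute.symm h

end BraidRelations

open scoped Kronecker

section TensorPowers

variable {d : ℕ}

noncomputable def kron (p q : ℕ) (A : Matrix (Fin p → Fin d) (Fin p → Fin d) ℂ)
    (B : Matrix (Fin q → Fin d) (Fin q → Fin d) ℂ) :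
    Matrix (Fin (p + q) → Fin d) (Fin (p + q) → Fin d) ℂ :=
  Matrix.reindex (Fin.appendEquiv p q) (Fin.appendEquiv p q) (A ⊗ₖ B)

theorem kron_apply (p q : ℕ) (A : Matrix (Fin p → Fin d) (Fin p → Fin d) ℂ)
    (B : Matrix (Fin q → Fin d) (Fin q → Fin d) ℂ) (u u' : Fin (p + q) → Fin d) :
    kron p q A B u u' =
      A (fun i => u (Fin.castAdd q i)) (fun i => u' (Fin.castAdd q i)) *
        B (fun j => u (Fin.natAdd p j)) (fun j => u' (Fin.natAdd p j)) := rfl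

theorem kron_mul (p q : ℕ) (A A' : Matrix (Fin p → Fin d) (Fin p → Fin d) ℂ)
    (B B' : Matrix (Fin q → Fin d) (Fin q → Fin d) ℂ) :
    kron p q A B * kron p q A' B' = kron p q (A * A') (B * B') := by
  simp [kron, Matrix.submatrix_mul_equiv, Matrix.mul_kronecker_mul]

variable (T : Matrix (Fin d × Fin d) (Fin d × Fin d) ℂ)

theorem Ti_eq_one {n i : ℕ} (h : ¬(1 ≤ i ∧ i < n)) : Ti d n T i = 1 := dif_neg h

theorem Ti_apply_of_lt {n i : ℕ} (h1 : 1 ≤ i) (h2 : i < n) (w w' : Fin n → Fin d) :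
    Ti d n T i w w' =
      T (w ⟨i - 1, by omega⟩, w ⟨i, h2⟩) (w' ⟨i - 1, by omega⟩, w' ⟨i, h2⟩) *
        ∏ j : Fin n,
          if (j : ℕ) = i - 1 ∨ (j : ℕ) = i then 1 else (if w j = w' j then 1 else 0) := by
  rw [show Ti d n T i = _ from dif_pos (And.intro h1 h2)]

theorem Ti_kron_left {p q i : ℕ} (h1 : 1 ≤ i) (h2 : i < p) :
    Ti d (p + q) T i = kron p q (Ti d p T i) 1 := by
  ext u u'
  have hq : ∀ j : Fin q, ¬((Fin.natAdd p j : ℕ) = i - 1 ∨ (Fin.natAdd p j : ℕ) = i) := by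
    intro j; simp only [Fin.val_natAdd]; omega
  rw [kron_apply, Ti_apply_of_lt T h1 (by omega), Ti_apply_of_lt T h1 h2, Fin.prod_univ_add]
  simp only [hq, if_false, Fintype.prod_boole, Matrix.one_apply, funext_iff, Fin.val_castAdd,
    mul_assoc]
  congr

theorem Ti_kron_right {p q i : ℕ} (h1 : 1 ≤ i) (h2 : i < q) :
    Ti d (p + q) T (p + i) = kron p q 1 (Ti d q T i) := by
  ext u u'
  have hp : ∀ j : Fin p,
      ¬((Fin.castAdd q j : ℕ) = p + i - 1 ∨ (Fin.castAdd q j : ℕ) = p + i) := by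
    intro j; simp only [Fin.val_castAdd]; omega
  have hq : ∀ j : Fin q,
      ((Fin.natAdd p j : ℕ) = p + i - 1 ∨ (Fin.natAdd p j : ℕ) = p + i) ↔
        ((j : ℕ) = i - 1 ∨ (j : ℕ) = i) := by
    intro j; simp only [Fin.val_natAdd]; omega
  have hidx (w : Fin (p + q) → Fin d) :
      w ⟨p + i - 1, by omega⟩ = w (Fin.natAdd p ⟨i - 1, by omega⟩) :=
    congrArg w (Fin.ext (by simp only [Fin.val_natAdd]; omega))
  rw [kron_apply, Ti_apply_of_lt T (by omega) (by omega), Ti_apply_of_lt T h1 h2, hidx u,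
    hidx u', Fin.prod_univ_add]
  simp only [hp, hq, if_false, Fintype.prod_boole, Matrix.one_apply, funext_iff]
  rw [mul_left_comm]
  congr

theorem Ti_commute {m i j : ℕ} (hij : i + 2 ≤ j) : Commute (Ti d m T i) (Ti d m T j) := by
  by_cases hi : 1 ≤ i
  · by_cases hj : j < m
    · obtain ⟨p, q, rfl, rfl⟩ : ∃ p q, j = p + 1 ∧ m = p + q :=
        ⟨j - 1, m - (j - 1), by omega, by omega⟩
      rw [Ti_kron_left T hi (by omega), Ti_kron_right T le_rfl (by omega)]
      simp only [Commute, SemiconjBy, kron_mul, mul_one, one_mul]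
    · rw [Ti_eq_one T (i := j) (by omega)]
      exact Commute.one_right _
  · rw [Ti_eq_one T (i := i) (by omega)]
    exact Commute.one_left _

theorem Ti_braid (hb : Braided d T) {m i : ℕ} (h1 : 1 ≤ i) (h2 : i + 2 ≤ m) :
    Ti d m T i * Ti d m T (i + 1) * Ti d m T i =
      Ti d m T (i + 1) * Ti d m T i * Ti d m T (i + 1) := by
  obtain ⟨p, q, rfl, rfl⟩ : ∃ p q, i = p + 1 ∧ m = p + (3 + q) :=
    ⟨i - 1, m - i - 2, by omega, by omega⟩
  rw [Ti_kron_right T le_rfl (by omega), Ti_kron_right T (i := 2) (by omega) (by omega),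
    Ti_kron_left T le_rfl (by omega), Ti_kron_left T (i := 2) (by omega) (by omega)]
  simp only [kron_mul, mul_one]
  exact congrArg (kron p (3 + q) 1 <| kron 3 q · 1) hb

theorem satisfiesBraidRelations_Ti (hb : Braided d T) (m : ℕ) :
    SatisfiesBraidRelations (fun i => Ti d m T (i + 1)) m :=
  ⟨fun _ _ hij _ => Ti_commute T (by omega), fun _ hi => Ti_braid T hb (by omega) (by omega)⟩

theorem oneTensor_eq_reindex (n : ℕ) (A : Matrix (Fin n → Fin d) (Fin n → Fin d) ℂ) :
    oneTensor d n A = Matrix.reindex (Fin.consEquiv fun _ => Fin d)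
      (Fin.consEquiv fun _ => Fin d) ((1 : Matrix (Fin d) (Fin d) ℂ) ⊗ₖ A) :=
  rfl

noncomputable def oneTensorHom (d n : ℕ) :
    Matrix (Fin n → Fin d) (Fin n → Fin d) ℂ →+*
      Matrix (Fin (n + 1) → Fin d) (Fin (n + 1) → Fin d) ℂ where
  toFun := oneTensor d n
  map_one' := by simp [oneTensor_eq_reindex]
  map_mul' A B := by
    simp only [oneTensor_eq_reindex, Matrix.reindex_apply, Matrix.submatrix_mul_equiv,
      ← Matrix.mul_kronecker_mul, Matrix.one_mul]
  map_zero' := by simp [oneTensor_eq_reindex]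
  map_add' A B := by
    ext u u'
    simp only [oneTensor, Matrix.add_apply, mul_add]

theorem oneTensor_Ti {n i : ℕ} (h1 : 1 ≤ i) :
    oneTensor d n (Ti d n T i) = Ti d (n + 1) T (i + 1) := by
  by_cases h2 : i < n
  · ext u u'
    have hcond : ∀ j : Fin n, ((j.succ : ℕ) = i + 1 - 1 ∨ (j.succ : ℕ) = i + 1) ↔
        ((j : ℕ) = i - 1 ∨ (j : ℕ) = i) := by
      intro j; simp only [Fin.val_succ]; omega
    have hidx (w : Fin (n + 1) → Fin d) :
        w ⟨i + 1 - 1, by omega⟩ = w (Fin.succ ⟨i - 1, by omega⟩) :=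
      congrArg w (Fin.ext (by simp only [Fin.val_succ]; omega))
    rw [oneTensor, Ti_apply_of_lt T h1 h2, Ti_apply_of_lt T (by omega) (by omega), hidx u,
      hidx u', Fin.prod_univ_succ]
    simp only [hcond, Fin.val_zero, show ¬(0 = i + 1 - 1 ∨ 0 = i + 1) by omega, if_false]
    rw [mul_left_comm]
    congr
  · rw [Ti_eq_one T (by omega), Ti_eq_one T (by omega)]
    exact (oneTensorHom d n).map_one

theorem prodT_eq_ascProd (m k : ℕ) :
    prodT d m T k = ascProd (fun i => Ti d m T (i + 1)) 0 k := by
  simp [prodT, ascProd]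

theorem Pmat_eq_symmetrizer (n : ℕ) :
    Pmat d T n = symmetrizer (fun i => Ti d n T (i + 1)) n := by
  induction n with
  | zero => rfl
  | succ n ih =>
    rw [Pmat, ih, symmetrizer_succ]
    congr 1
    · exact (map_symmetrizer (oneTensorHom d n) _ n).trans
        (congrArg (symmetrizer · n) (funext fun i => oneTensor_Ti T (by omega)))
    · simp only [Rmat, ascSum, prodT_eq_ascProd]

theorem Umat_eq_halfTwist (m n : ℕ) :
    Umat d m T n = halfTwist (fun i => Ti d m T (i + 1)) n := by
  simp only [Umat, halfTwist, prodT_eq_ascProd]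

end TensorPowers

theorem ker_P_invariant_U_general (d n : ℕ) (T : Matrix (Fin d × Fin d) (Fin d × Fin d) ℂ)
    (hbraid : Braided d T)
    (v : (Fin (n + 1) → Fin d) → ℂ) (hv : (Pmat d T (n + 1)).mulVec v = 0) :
    (Pmat d T (n + 1)).mulVec ((Umat d (n + 1) T n).mulVec v) = 0 := by
  have hPU : Commute (Pmat d T (n + 1)) (Umat d (n + 1) T n) := by
    rw [Pmat_eq_symmetrizer, Umat_eq_halfTwist]
    exact commute_symmetrizer_halfTwist (satisfiesBraidRelations_Ti T hbraid (n + 1))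
  rw [Matrix.mulVec_mulVec, hPU.eq, ← Matrix.mulVec_mulVec, hv, Matrix.mulVec_zero]

/-- Let `T` be a braided self-adjoint contraction on `H ⊗ H`, and
`U_n = (T_1⋯T_n)(T_1⋯T_{n-1})⋯T_1` on `H^{⊗(n+1)}`.  Then `ker P_{n+1}` is invariant
under `U_n`. -/
theorem ker_P_invariant_U (d n : ℕ) (T : Matrix (Fin d × Fin d) (Fin d × Fin d) ℂ)
    (hsa : T.IsHermitian) (hcontr : ‖Matrix.toEuclideanCLM (𝕜 := ℂ) T‖ ≤ 1)
    (hbraid : Braided d T)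
    (v : (Fin (n + 1) → Fin d) → ℂ) (hv : (Pmat d T (n + 1)).mulVec v = 0) :
    (Pmat d T (n + 1)).mulVec ((Umat d (n + 1) T n).mulVec v) = 0 :=
  ker_P_invariant_U_general d n T hbraid v hv

end Wick
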